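/- Let m, n ≥ 1 and let B¹,…,Bⁿ be m×m real matrices, each skew-symmetric and orthogonal, with BⁱBʲ = −BʲBⁱ for i ≠ j. Define d(x,t) = (‖x‖⁴ + 16‖t‖²)^{1/4} on ℝᵐ × ℝⁿ. Then for every (x,t) ≠ (0,0), the horizontal gradient ∇_H d = (X₁d,…,X_m d) satisfies ‖∇_H d(x,t)‖² = ‖x‖² / d(x,t)², where X_j u(x,t) = ∂_{x_j}u(x,t) + ½Σ_{k=1}^n (Bᵏx)_j ∂_{t_k}u(x,t). Equivalently, φ = d⁴ satisfies ‖∇_H φ(x,t)‖² = 16‖x‖² φ(x,t) for all (x,t). -/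

import Mathlib

open Matrix MeasureTheory
open scoped BigOperators

noncomputable section

/-- The underlying space of the prototype H-type group: `ℝᵐ × ℝⁿ`. -/
abbrev G (m n : ℕ) : Type := (Fin m → ℝ) × (Fin n → ℝ)

/-- Squared Euclidean norm on `ℝᵏ`. -/
def sqnorm {k : ℕ} (x : Fin k → ℝ) : ℝ := ∑ i, x i ^ 2

/-- The homogeneous norm `d(x,t) = (‖x‖⁴ + 16‖t‖²)^(1/4)`. -/
def hnorm {m n : ℕ} (p : G m n) : ℝ := (sqnorm p.1 ^ 2 + 16 * sqnorm p.2) ^ (4⁻¹ : ℝ)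

/-- The group law `(x,t)∘(y,s) = (x+y, t+s+½⟨Bᵏx,y⟩)`. -/
def gmul {m n : ℕ} (B : Fin n → Matrix (Fin m) (Fin m) ℝ) (p q : G m n) : G m n :=
  (p.1 + q.1, fun k => p.2 k + q.2 k + (1 / 2) * ((B k).mulVec p.1 ⬝ᵥ q.1))

/-- The group inverse `p⁻¹ = -p`. -/
def ginv {m n : ℕ} (p : G m n) : G m n := (-p.1, -p.2)

/-- The `d`-ball `B_R(p) = {q : d(p⁻¹∘q) < R}`. -/
def dball {m n : ℕ} (B : Fin n → Matrix (Fin m) (Fin m) ℝ) (p : G m n) (R : ℝ) :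
    Set (G m n) := {q | hnorm (gmul B (ginv p) q) < R}

/-- The vector of the horizontal field `X_j` at `p`:
`X_j = ∂_{x_j} + ½ Σ_k (Bᵏx)_j ∂_{t_k}`. -/
def Xvec {m n : ℕ} (B : Fin n → Matrix (Fin m) (Fin m) ℝ) (j : Fin m) (p : G m n) : G m n :=
  (fun i => if i = j then 1 else 0, fun k => (1 / 2) * (B k).mulVec p.1 j)

/-- The horizontal derivative `X_j u (p)`. -/
def Xop {m n : ℕ} (B : Fin n → Matrix (Fin m) (Fin m) ℝ) (j : Fin m) (u : G m n → ℝ)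
    (p : G m n) : ℝ := fderiv ℝ u p (Xvec B j p)

/-- The horizontally elliptic operator `L_A u = Σ_{i,j} a_{ij} X_i X_j u`. -/
def Lop {m n : ℕ} (B : Fin n → Matrix (Fin m) (Fin m) ℝ)
    (A : G m n → Matrix (Fin m) (Fin m) ℝ) (u : G m n → ℝ) (p : G m n) : ℝ :=
  ∑ i, ∑ j, A p i j * Xop B i (Xop B j u) p

/-- The defining conditions on the matrices `B¹,…,Bⁿ` of a prototype H-type group:
skew-symmetric, orthogonal, pairwise anticommuting. -/
def HTypeData {m n : ℕ} (B : Fin n → Matrix (Fin m) (Fin m) ℝ) : Prop :=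
  (∀ k, (B k)ᵀ = -(B k)) ∧ (∀ k, (B k)ᵀ * B k = 1) ∧
    (∀ i j, i ≠ j → B i * B j = -(B j * B i))

/-- The quadratic form `⟨Aξ, ξ⟩`. -/
def quadForm {m : ℕ} (A : Matrix (Fin m) (Fin m) ℝ) (ξ : Fin m → ℝ) : ℝ :=
  A.mulVec ξ ⬝ᵥ ξ

/-- Uniform ellipticity: `λ‖ξ‖² ≤ ⟨Aξ,ξ⟩ ≤ Λ‖ξ‖²`. -/
def UnifElliptic {m : ℕ} (lam Lam : ℝ) (A : Matrix (Fin m) (Fin m) ℝ) : Prop :=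
  ∀ ξ : Fin m → ℝ, lam * sqnorm ξ ≤ quadForm A ξ ∧ quadForm A ξ ≤ Lam * sqnorm ξ

/-- The δ-Landis condition
`Tr(A) + (Q+2−m)·max_{‖ξ‖=1}⟨Aξ,ξ⟩ ≤ (Q+4−δ)·min_{‖ξ‖=1}⟨Aξ,ξ⟩`,
stated equivalently via universal quantification over unit vectors. -/
def Landis {m : ℕ} (Q δ : ℝ) (A : Matrix (Fin m) (Fin m) ℝ) : Prop :=
  ∀ ξ ζ : Fin m → ℝ, sqnorm ξ = 1 → sqnorm ζ = 1 →
    A.trace + (Q + 2 - m) * quadForm A ξ ≤ (Q + 4 - δ) * quadForm A ζ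

/-- `φ = d⁴`. -/
def phi {m n : ℕ} (p : G m n) : ℝ := sqnorm p.1 ^ 2 + 16 * sqnorm p.2

/-!
Writing `J_t = Σₖ tₖ Bᵏ`, one computes `∇_H φ(x,t) = 4‖x‖² x + 16 J_t x`. The H-type relations
are the Clifford relations `BᵏBˡ + BˡBᵏ = -2δₖₗ`, so `J_t` is skew with `J_t² = -‖t‖²`: hence
`x ⊥ J_t x` and `‖J_t x‖ = ‖t‖‖x‖`, and Pythagoras gives `‖∇_H φ‖² = 16‖x‖²(‖x‖⁴ + 16‖t‖²)`.
The identity for `d = φ^{1/4}` follows by the chain rule `∇_H d = d/(4φ) ∇_H φ`.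
-/

lemma sqnorm_eq_dotProduct {k : ℕ} (x : Fin k → ℝ) : sqnorm x = x ⬝ᵥ x := by
  simp [sqnorm, dotProduct, sq]

lemma sqnorm_nonneg {k : ℕ} (x : Fin k → ℝ) : 0 ≤ sqnorm x :=
  Finset.sum_nonneg fun i _ => sq_nonneg (x i)

lemma sum_sq_add_of_dotProduct_eq_zero {k : ℕ} {x y : Fin k → ℝ} (h : x ⬝ᵥ y = 0) (a b : ℝ) :
    ∑ j, (a * x j + b * y j) ^ 2 = a ^ 2 * sqnorm x + b ^ 2 * sqnorm y := by
  have hxy : ∑ j, x j * y j = 0 := h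
  have hexp : ∀ j, (a * x j + b * y j) ^ 2 = a ^ 2 * x j ^ 2 + 2 * a * b * (x j * y j)
      + b ^ 2 * y j ^ 2 := fun j => by ring
  simp only [hexp, Finset.sum_add_distrib, ← Finset.mul_sum, hxy, sqnorm]
  ring

lemma dotProduct_mulVec_self_of_transpose_eq_neg {m : ℕ} {M : Matrix (Fin m) (Fin m) ℝ}
    (hM : Mᵀ = -M) (x : Fin m → ℝ) : x ⬝ᵥ M *ᵥ x = 0 := by
  have h : x ⬝ᵥ M *ᵥ x = -(x ⬝ᵥ M *ᵥ x) := by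
    conv_lhs => rw [dotProduct_mulVec, ← mulVec_transpose, hM, dotProduct_comm, neg_mulVec,
      dotProduct_neg]
  linarith

def jMatrix {m n : ℕ} (B : Fin n → Matrix (Fin m) (Fin m) ℝ) (t : Fin n → ℝ) :
    Matrix (Fin m) (Fin m) ℝ :=
  ∑ k, t k • B k

lemma jMatrix_mulVec_apply {m n : ℕ} (B : Fin n → Matrix (Fin m) (Fin m) ℝ) (t : Fin n → ℝ)
    (x : Fin m → ℝ) (j : Fin m) : (jMatrix B t *ᵥ x) j = ∑ k, t k * (B k *ᵥ x) j := by
  simp [jMatrix, sum_mulVec, smul_mulVec]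

lemma jMatrix_transpose {m n : ℕ} {B : Fin n → Matrix (Fin m) (Fin m) ℝ}
    (hskew : ∀ k, (B k)ᵀ = -B k) (t : Fin n → ℝ) : (jMatrix B t)ᵀ = -jMatrix B t := by
  simp [jMatrix, transpose_sum, hskew]

lemma hasFDerivAt_sqnorm {k : ℕ} (x : Fin k → ℝ) :
    HasFDerivAt sqnorm (∑ i, (2 * x i) • (ContinuousLinearMap.proj i : (Fin k → ℝ) →L[ℝ] ℝ)) x := by
  unfold sqnorm
  refine HasFDerivAt.fun_sum fun i _ => ?_
  simpa using (hasFDerivAt_apply (𝕜 := ℝ) i x).pow 2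

lemma fderiv_phi_apply {m n : ℕ} (p v : G m n) :
    fderiv ℝ phi p v = 4 * sqnorm p.1 * (p.1 ⬝ᵥ v.1) + 32 * (p.2 ⬝ᵥ v.2) := by
  have h : HasFDerivAt phi _ p := (((hasFDerivAt_sqnorm p.1).comp p hasFDerivAt_fst).pow 2).add
    (((hasFDerivAt_sqnorm p.2).comp p hasFDerivAt_snd).const_mul 16)
  rw [h.fderiv]
  simp only [Function.comp_apply, Nat.add_one_sub_one, pow_one, nsmul_eq_mul, Nat.cast_ofNat,
    _root_.add_apply, _root_.smul_apply, ContinuousLinearMap.comp_apply,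
    ContinuousLinearMap.coe_fst', ContinuousLinearMap.coe_snd', _root_.sum_apply,
    ContinuousLinearMap.proj_apply, smul_eq_mul, Finset.mul_sum, dotProduct]
  ring_nf

lemma differentiable_phi {m n : ℕ} : Differentiable ℝ (phi : G m n → ℝ) := by
  unfold phi sqnorm
  fun_prop

lemma Xop_phi {m n : ℕ} (B : Fin n → Matrix (Fin m) (Fin m) ℝ) (j : Fin m) (p : G m n) :
    Xop B j phi p = 4 * sqnorm p.1 * p.1 j + 16 * (jMatrix B p.2 *ᵥ p.1) j := by
  simp only [Xop, Xvec, fderiv_phi_apply, dotProduct, mul_ite, mul_one, mul_zero,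
    Finset.sum_ite_eq', Finset.mem_univ, if_true, Finset.mul_sum, jMatrix_mulVec_apply]
  ring_nf

lemma Xop_comp {m n : ℕ} (B : Fin n → Matrix (Fin m) (Fin m) ℝ) (j : Fin m) {f : ℝ → ℝ}
    {f' : ℝ} {u : G m n → ℝ} {p : G m n} (hf : HasDerivAt f f' (u p))
    (hu : DifferentiableAt ℝ u p) : Xop B j (f ∘ u) p = f' * Xop B j u p := by
  rw [Xop, Xop, (hf.comp_hasFDerivAt p hu.hasFDerivAt).fderiv]
  rfl

lemma phi_nonneg {m n : ℕ} (p : G m n) : 0 ≤ phi p := by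
  have := sqnorm_nonneg p.2
  unfold phi
  positivity

lemma phi_pos {m n : ℕ} {p : G m n} (hp : p ≠ 0) : 0 < phi p := by
  refine (phi_nonneg p).lt_of_ne' fun h0 => hp ?_
  have h1 := sqnorm_nonneg p.1
  have h2 := sqnorm_nonneg p.2
  have hx : sqnorm p.1 = 0 := by unfold phi at h0; nlinarith
  have ht : sqnorm p.2 = 0 := by unfold phi at h0; nlinarith
  rw [sqnorm_eq_dotProduct, dotProduct_self_eq_zero] at hx ht
  exact Prod.ext hx ht

lemma hnorm_eq_rpow_phi {m n : ℕ} (p : G m n) : hnorm p = phi p ^ (4⁻¹ : ℝ) := rfl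

lemma hnorm_pow_four {m n : ℕ} (p : G m n) : hnorm p ^ 4 = phi p := by
  rw [hnorm_eq_rpow_phi, ← Real.rpow_natCast, ← Real.rpow_mul (phi_nonneg p)]
  norm_num

lemma Xop_hnorm {m n : ℕ} (B : Fin n → Matrix (Fin m) (Fin m) ℝ) (j : Fin m) {p : G m n}
    (hp : phi p ≠ 0) : Xop B j hnorm p = hnorm p / (4 * phi p) * Xop B j phi p := by
  have h := Xop_comp B j (Real.hasDerivAt_rpow_const (p := 4⁻¹) (Or.inl hp))
    differentiable_phi.differentiableAt
  rw [Real.rpow_sub_one hp] at h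
  change Xop B j ((· ^ (4⁻¹ : ℝ)) ∘ phi) p = _
  rw [h, hnorm_eq_rpow_phi]
  ring

namespace HTypeData

variable {m n : ℕ} {B : Fin n → Matrix (Fin m) (Fin m) ℝ}

lemma mul_add_mul (hB : HTypeData B) (k l : Fin n) :
    B k * B l + B l * B k = if k = l then -2 else 0 := by
  obtain ⟨hskew, horth, hanti⟩ := hB
  split_ifs with hkl
  · subst hkl
    have hsq : B k * B k = -1 := by
      simpa [hskew, Matrix.neg_mul, neg_eq_iff_eq_neg] using horth k
    rw [hsq]
    norm_num
  · rw [hanti k l hkl, neg_add_cancel]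

lemma jMatrix_mul_self (hB : HTypeData B) (t : Fin n → ℝ) :
    jMatrix B t * jMatrix B t = -(sqnorm t • 1) := by
  have hsymm : (2 : ℝ) • (jMatrix B t * jMatrix B t)
      = ∑ k, ∑ l, (t k * t l) • (B k * B l + B l * B k) := by
    simp only [jMatrix, Finset.sum_mul_sum, smul_mul_smul, smul_add, Finset.sum_add_distrib,
      two_smul]
    rw [Finset.sum_comm (f := fun k l => (t k * t l) • (B l * B k))]
    simp only [mul_comm]
  refine smul_right_injective _ (two_ne_zero (α := ℝ)) ?_
  simp only [hsymm, mul_add_mul hB, smul_ite, smul_zero, Finset.sum_ite_eq, Finset.mem_univ,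
    if_true, sqnorm]
  rw [← Finset.sum_smul, show (-2 : Matrix (Fin m) (Fin m) ℝ) = (-2 : ℝ) • 1 by
    rw [neg_smul, two_smul, one_add_one_eq_two]]
  simp only [sq]
  module

lemma sqnorm_jMatrix_mulVec (hB : HTypeData B) (t : Fin n → ℝ) (x : Fin m → ℝ) :
    sqnorm (jMatrix B t *ᵥ x) = sqnorm t * sqnorm x := by
  have h : jMatrix B t *ᵥ x ⬝ᵥ jMatrix B t *ᵥ x = x ⬝ᵥ ((jMatrix B t)ᵀ * jMatrix B t) *ᵥ x := by
    rw [← mulVec_mulVec, dotProduct_mulVec x, vecMul_transpose]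
  rw [sqnorm_eq_dotProduct, h, jMatrix_transpose hB.1, Matrix.neg_mul, jMatrix_mul_self hB,
    neg_neg, smul_mulVec, one_mulVec, dotProduct_smul, smul_eq_mul]
  simp only [sqnorm_eq_dotProduct]

lemma sum_Xop_phi_sq (hB : HTypeData B) (p : G m n) :
    ∑ j, Xop B j phi p ^ 2 = 16 * sqnorm p.1 * phi p := by
  simp only [Xop_phi]
  rw [sum_sq_add_of_dotProduct_eq_zero
    (dotProduct_mulVec_self_of_transpose_eq_neg (jMatrix_transpose hB.1 p.2) p.1),
    hB.sqnorm_jMatrix_mulVec, phi]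
  ring

end HTypeData

theorem horizontal_gradient_norm_identity_general
    (m n : ℕ)
    (B : Fin n → Matrix (Fin m) (Fin m) ℝ) (hB : HTypeData B) :
    (∀ p : G m n, p ≠ 0 →
      ∑ j, (Xop B j hnorm p) ^ 2 = sqnorm p.1 / hnorm p ^ 2) ∧
    (∀ p : G m n,
      ∑ j, (Xop B j phi p) ^ 2 = 16 * sqnorm p.1 * phi p) := by
  refine ⟨fun p hp => ?_, hB.sum_Xop_phi_sq⟩
  have hφ := phi_pos hp
  simp only [Xop_hnorm B _ hφ.ne', mul_pow, ← Finset.mul_sum, hB.sum_Xop_phi_sq,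
    ← hnorm_pow_four p]
  have hd : hnorm p ≠ 0 := (Real.rpow_pos_of_pos hφ _).ne'
  field_simp
  ring

/-- The horizontal gradient of the homogeneous norm satisfies
`‖∇_H d(x,t)‖² = ‖x‖²/d(x,t)²` away from the origin; equivalently, `φ = d⁴` satisfies
`‖∇_H φ(x,t)‖² = 16‖x‖²φ(x,t)` everywhere. -/
theorem horizontal_gradient_norm_identity
    (m n : ℕ) (hm : 1 ≤ m) (hn : 1 ≤ n)
    (B : Fin n → Matrix (Fin m) (Fin m) ℝ) (hB : HTypeData B) :
    (∀ p : G m n, p ≠ 0 →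
      ∑ j, (Xop B j hnorm p) ^ 2 = sqnorm p.1 / hnorm p ^ 2) ∧
    (∀ p : G m n,
      ∑ j, (Xop B j phi p) ^ 2 = 16 * sqnorm p.1 * phi p) :=
  horizontal_gradient_norm_identity_general m n B hB

end
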